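/- arXiv:2404.12073 — 5 statements merged into one kernel-verified Lean document; each statement's English description precedes it below -/
import Mathlib

section
/- Let (x_n)_{n≥0} be a real sequence satisfying x_{n+1} = x_n·x_{n-1} − x_{n-2} for all n ≥ 2. If there exists N ≥ 0 such that 2 < |x_N|, |x_N| < |x_{N+1}|, and |x_{N+1}| < |x_{N+2}|, then |x_n| > 2 for all n ≥ N and |x_n| → ∞ as n → ∞. -/
open Filter

/-!
Write `a n = |x n|`; the triangle inequality gives `a (n+3) ≥ a (n+2) a (n+1) - a n`.
If `2 < a n < a (n+1) < a (n+2)` then `a (n+2) (a (n+1) - 1) > a (n+2) > a n`, so the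
next term is larger again: the sequence increases strictly from `N` on. Monotonicity then
upgrades the bound to `a (n+3) > a (n+2) (a (n+1) - 1) ≥ (a N - 1) a (n+2)` with
`a N - 1 > 1`, so the sequence grows at least geometrically.
-/

/-- The inequality satisfied by the absolute values of a solution of the recursion. -/
def SuperRec (a : ℕ → ℝ) : Prop :=
  ∀ n, a (n + 2) * a (n + 1) - a n ≤ a (n + 3)

lemma superRec_abs {x : ℕ → ℝ} (hrec : ∀ n, x (n + 3) = x (n + 2) * x (n + 1) - x n) :
    SuperRec fun n => |x n| := fun n =>
  calc |x (n + 2)| * |x (n + 1)| - |x n|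
      = |x (n + 2) * x (n + 1)| - |x n| := by rw [abs_mul]
    _ ≤ |x (n + 2) * x (n + 1) - x n| := abs_sub_abs_le_abs_sub _ _
    _ = |x (n + 3)| := by rw [hrec n]

namespace SuperRec

variable {a : ℕ → ℝ}

lemma shift (ha : SuperRec a) (N : ℕ) : SuperRec fun n => a (N + n) := fun n => ha (N + n)

lemma lt_succ_of_lt_of_lt (ha : SuperRec a) {n : ℕ} (h0 : 2 < a n) (h1 : a n < a (n + 1))
    (h2 : a (n + 1) < a (n + 2)) : a (n + 2) < a (n + 3) := by
  nlinarith [ha n]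

lemma strictMono (ha : SuperRec a) (h0 : 2 < a 0) (h1 : a 0 < a 1) (h2 : a 1 < a 2) :
    StrictMono a := by
  have triple : ∀ n, 2 < a n ∧ a n < a (n + 1) ∧ a (n + 1) < a (n + 2) := by
    intro n
    induction n with
    | zero => exact ⟨h0, h1, h2⟩
    | succ n ih =>
      obtain ⟨hn, hn1, hn2⟩ := ih
      exact ⟨by linarith, hn2, ha.lt_succ_of_lt_of_lt hn hn1 hn2⟩
  exact strictMono_nat_of_lt_succ fun n => (triple n).2.1

lemma tendsto_atTop (ha : SuperRec a) (h0 : 2 < a 0) (hmono : StrictMono a) :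
    Tendsto a atTop atTop := by
  have hgeom : ∀ n, (a 0 - 1) * a (n + 2) ≤ a (n + 2 + 1) := by
    intro n
    have hn : a n < a (n + 2) := hmono (by omega)
    have hn1 : a 0 ≤ a (n + 1) := hmono.monotone (Nat.zero_le _)
    have hn2 : 0 < a (n + 2) := by linarith [hmono.monotone (Nat.zero_le (n + 2))]
    nlinarith [ha n]
  have hpos : 0 < a (0 + 2) := by linarith [hmono (show 0 < 0 + 2 by omega)]
  exact (tendsto_add_atTop_iff_nat 2).mp
    (tendsto_atTop_of_geom_le hpos (by linarith) hgeom)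

end SuperRec

/-- If an orbit of the recursion `x_{n+1} = x_n x_{n-1} - x_{n-2}` has three successively
growing terms beyond the threshold 2, then it stays above 2 and diverges. -/
theorem escape_criterion (x : ℕ → ℝ)
    (hrec : ∀ n : ℕ, x (n + 3) = x (n + 2) * x (n + 1) - x n)
    (N : ℕ) (h1 : 2 < |x N|) (h2 : |x N| < |x (N + 1)|) (h3 : |x (N + 1)| < |x (N + 2)|) :
    (∀ n ≥ N, 2 < |x n|) ∧ Tendsto (fun n => |x n|) atTop atTop := by
  have ha : SuperRec fun k => |x (N + k)| := (superRec_abs hrec).shift N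
  have hmono : StrictMono fun k => |x (N + k)| := ha.strictMono h1 h2 h3
  refine ⟨fun n hn => ?_, ?_⟩
  · obtain ⟨k, rfl⟩ := Nat.exists_eq_add_of_le hn
    exact h1.trans_le (hmono.monotone (Nat.zero_le k))
  · have hshift := ha.tendsto_atTop h1 hmono
    simp only [add_comm N] at hshift
    exact (tendsto_add_atTop_iff_nat N).mp hshift
end

section
/- Let (x_n)_{n≥0} be a real sequence satisfying x_{n+1} = x_n·x_{n-1} − x_{n-2} for all n ≥ 2. If there exists N ≥ 0 such that 2 < |x_N| < |x_{N+1}| < |x_{N+2}|, then for every integer n ≥ 1 one has |x_{N+2+n}| > |x_{N+2}|·(|x_N| − 1)^n. -/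
/-- Quantitative growth estimate for escaping orbits of the recursion
`x_{n+1} = x_n x_{n-1} - x_{n-2}`. -/
theorem escape_growth_estimate (x : ℕ → ℝ)
    (hrec : ∀ n : ℕ, x (n + 3) = x (n + 2) * x (n + 1) - x n)
    (N : ℕ) (h1 : 2 < |x N|) (h2 : |x N| < |x (N + 1)|) (h3 : |x (N + 1)| < |x (N + 2)|) :
    ∀ n : ℕ, 1 ≤ n → |x (N + 2 + n)| > |x (N + 2)| * (|x N| - 1) ^ n := by
  have inv : ∀ k : ℕ, |x N| ≤ |x (N + k)| ∧ |x (N + k)| < |x (N + k + 1)| ∧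
      |x (N + k + 1)| < |x (N + k + 2)| := by
    intro k
    induction k with
    | zero => exact ⟨le_refl _, h2, h3⟩
    | succ m ih =>
      obtain ⟨ha, hb, hc⟩ := ih
      have h0 : (0:ℝ) < |x (N + m + 2)| := by linarith
      have habs : |x (N + m + 2)| * |x (N + m + 1)| - |x (N + m)| ≤ |x (N + m + 3)| := by
        rw [hrec (N + m)]
        calc |x (N + m + 2)| * |x (N + m + 1)| - |x (N + m)|
            = |x (N + m + 2) * x (N + m + 1)| - |x (N + m)| := by rw [abs_mul]
          _ ≤ |x (N + m + 2) * x (N + m + 1) - x (N + m)| := abs_sub_abs_le_abs_sub _ _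
      have hgt : |x (N + m + 2)| < |x (N + m + 3)| := by nlinarith
      have e1 : N + (m + 1) = N + m + 1 := by ring
      have e2 : N + m + 1 + 1 = N + m + 2 := by omega
      have e3 : N + m + 1 + 2 = N + m + 3 := by omega
      rw [e1, e2, e3]
      exact ⟨by linarith, hc, hgt⟩
  have hstep : ∀ k : ℕ, |x (N + k + 2)| * (|x N| - 1) < |x (N + k + 3)| := by
    intro k
    obtain ⟨ha, hb, hc⟩ := inv k
    have ha1 : |x N| ≤ |x (N + k + 1)| := le_of_lt (lt_of_le_of_lt ha hb)
    have h0 : (0:ℝ) < |x (N + k + 2)| := by linarith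
    have habs : |x (N + k + 2)| * |x (N + k + 1)| - |x (N + k)| ≤ |x (N + k + 3)| := by
      rw [hrec (N + k)]
      calc |x (N + k + 2)| * |x (N + k + 1)| - |x (N + k)|
          = |x (N + k + 2) * x (N + k + 1)| - |x (N + k)| := by rw [abs_mul]
        _ ≤ |x (N + k + 2) * x (N + k + 1) - x (N + k)| := abs_sub_abs_le_abs_sub _ _
    nlinarith [mul_le_mul_of_nonneg_left ha1 h0.le]
  intro n hn
  induction n, hn using Nat.le_induction with
  | base =>
    have h := hstep 0
    have e : N + 0 + 3 = N + 2 + 1 := by omega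
    have e2 : N + 0 + 2 = N + 2 := by omega
    rw [e, e2] at h
    simpa using h
  | succ n hn ih =>
    have h := hstep n
    have e3 : N + n + 3 = N + 2 + (n + 1) := by omega
    have e2 : N + n + 2 = N + 2 + n := by omega
    rw [e3, e2] at h
    have h1' : (1:ℝ) < |x N| - 1 := by linarith
    have hp : (0:ℝ) < (|x N| - 1) ^ n := by positivity
    calc |x (N + 2)| * (|x N| - 1) ^ (n + 1)
        = (|x (N + 2)| * (|x N| - 1) ^ n) * (|x N| - 1) := by ring
      _ < |x (N + 2 + n)| * (|x N| - 1) := by nlinarith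
      _ < |x (N + 2 + (n + 1))| := h
end

section
/- Let M be a 2×2 real matrix with determinant 1 and let L > 0. There exists a real number k such that det(M − e^{ikL}·I) = 0 (as a complex 2×2 determinant) if and only if tr(M) ∈ [−2, 2]. -/
open Matrix Complex

/-!
With `z = e^{ikL}` and `det M = 1`, the determinant is `z² - (tr M) z + 1`. Since `z z̄ = 1`,
this vanishes exactly when `tr M = z + z̄ = 2 cos (kL)`, and `2 cos` takes exactly the values
in `[-2, 2]`.
-/

theorem Matrix.det_sub_smul_one_fin_two {R : Type*} [CommRing R]
    (A : Matrix (Fin 2) (Fin 2) R) (z : R) :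
    (A - z • (1 : Matrix (Fin 2) (Fin 2) R)).det = z ^ 2 - A.trace * z + A.det := by
  simp only [det_fin_two, trace_fin_two, sub_apply, smul_apply, one_apply_eq,
    one_apply_ne zero_ne_one, one_apply_ne one_ne_zero, smul_eq_mul]
  ring

theorem Complex.sq_sub_ofReal_mul_add_one_eq_zero_iff {z : ℂ} (hz : ‖z‖ = 1) (t : ℝ) :
    z ^ 2 - t * z + 1 = 0 ↔ t = 2 * z.re := by
  have hconj : z * starRingEnd ℂ z = 1 := by
    rw [Complex.mul_conj, Complex.normSq_eq_norm_sq, hz]; norm_num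
  have hz0 : z ≠ 0 := norm_ne_zero_iff.mp (by rw [hz]; exact one_ne_zero)
  rw [← Complex.ofReal_inj, Complex.ofReal_mul, Complex.re_eq_add_conj]
  constructor
  · intro h
    have hfactor : z * (t - (z + starRingEnd ℂ z)) = 0 := by linear_combination -h - hconj
    push_cast
    linear_combination (mul_eq_zero.mp hfactor).resolve_left hz0
  · intro h
    push_cast at h
    linear_combination -z * h - hconj

theorem Real.exists_eq_two_mul_cos_mul_iff {L : ℝ} (hL : L ≠ 0) (t : ℝ) :
    (∃ k : ℝ, t = 2 * Real.cos (k * L)) ↔ t ∈ Set.Icc (-2 : ℝ) 2 := by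
  have hrange : t / 2 ∈ Set.range Real.cos ↔ t ∈ Set.Icc (-2 : ℝ) 2 := by
    rw [Real.range_cos, Set.mem_Icc, Set.mem_Icc]
    constructor <;> rintro ⟨h1, h2⟩ <;> constructor <;> linarith
  rw [← hrange]
  constructor
  · rintro ⟨k, rfl⟩
    exact ⟨k * L, by ring⟩
  · rintro ⟨θ, hθ⟩
    exact ⟨θ / L, by rw [div_mul_cancel₀ θ hL, hθ]; ring⟩

/-- For `M ∈ SL(2,ℝ)`, there is a real Bloch momentum `k` solving the dispersion relation
`det(M - e^{ikL} I) = 0` if and only if `tr M ∈ [-2, 2]`. -/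
theorem exists_bloch_momentum_iff (M : Matrix (Fin 2) (Fin 2) ℝ) (hM : M.det = 1)
    (L : ℝ) (hL : 0 < L) :
    (∃ k : ℝ,
      (M.map (Complex.ofReal)
        - Complex.exp (Complex.I * k * L) • (1 : Matrix (Fin 2) (Fin 2) ℂ)).det = 0)
      ↔ M.trace ∈ Set.Icc (-2 : ℝ) 2 := by
  have hdet : (M.map ofReal).det = 1 := (ofRealHom.map_det M).symm.trans (by simp [hM])
  have htrace : (M.map ofReal).trace = M.trace := (AddMonoidHom.map_trace ofRealHom M).symm
  have hphase : ∀ k : ℝ, I * k * L = ((k * L : ℝ) : ℂ) * I := fun k => by push_cast; ring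
  rw [← Real.exists_eq_two_mul_cos_mul_iff hL.ne']
  refine exists_congr fun k => ?_
  rw [det_sub_smul_one_fin_two, hdet, htrace, hphase, ← exp_ofReal_mul_I_re,
    sq_sub_ofReal_mul_add_one_eq_zero_iff (norm_exp_ofReal_mul_I _)]
end

section
/- Let X₀ and X₁ be independent random variables, each uniformly distributed on [−2, 2], and set Ω₀ = arccos(X₀/2), Ω₁ = arccos(X₁/2). Then the product sin Ω₀ · sin Ω₁ has probability density function f(x) = ∫_x^1 x / (√(y² − x²)·√(1 − y²)) dy for 0 < x < 1 (and f(x) = 0 outside (0, 1)), with respect to Lebesgue measure. -/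
/-!
Since `sin (arccos (x / 2)) = √(1 - x² / 4)`, for `X` uniform on `[-2, 2]` the variable
`sin (arccos (X / 2))` has distribution function `1 - √(1 - t²)` on `[0, 1]`, hence density
`y / √(1 - y²)` there. A product of independent variables with densities `f`, `g` has density
`z ↦ ∫ f a g (z / a) / |a| da`; for our density the integrand lives on `z < a < 1` and equals
the stated kernel. The kernel need not be integrable for every `z`, but it is wherever the product
density is finite, which is almost everywhere since that density integrates to `1`; and a density
only matters up to a.e. equality.
-/

open MeasureTheory ProbabilityTheory Set Real
open scoped ENNReal

theorem Real.lintegral_comp_mul_left {a : ℝ} (ha : a ≠ 0) (h : ℝ → ℝ≥0∞) :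
    ∫⁻ b, h (a * b) = ENNReal.ofReal |a⁻¹| * ∫⁻ z, h z :=
  calc ∫⁻ b, h (a * b) = ∫⁻ z, h z ∂(Measure.map (a * ·) volume) :=
        (lintegral_map_equiv h (MeasurableEquiv.mulLeft₀ a ha)).symm
    _ = _ := by rw [Real.map_volume_mul_left ha, lintegral_smul_measure, smul_eq_mul]

-- The junk value `|0|⁻¹ = 0` at `a = 0` is harmless: `{0}` is Lebesgue-null.
noncomputable def mconvDensity (f g : ℝ → ℝ≥0∞) (z : ℝ) : ℝ≥0∞ :=
  ∫⁻ a, f a * ENNReal.ofReal |a|⁻¹ * g (z / a)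

section mconvDensity

variable {f g : ℝ → ℝ≥0∞}

theorem measurable_mconvDensity (hf : Measurable f) (hg : Measurable g) :
    Measurable (mconvDensity f g) :=
  Measurable.lintegral_prod_left'
    (f := fun p : ℝ × ℝ => f p.1 * ENNReal.ofReal |p.1|⁻¹ * g (p.2 / p.1)) (by fun_prop)

theorem withDensity_mconv_withDensity (hf : Measurable f) (hg : Measurable g) :
    volume.withDensity f ∗ₘ volume.withDensity g = volume.withDensity (mconvDensity f g) := by
  refine Measure.ext_of_lintegral _ fun h hh => ?_
  have hinner (a : ℝ) (ha : a ≠ 0) :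
      f a * ∫⁻ b, g b * h (a * b) =
        ∫⁻ z, f a * ENNReal.ofReal |a|⁻¹ * g (z / a) * h z := by
    have := Real.lintegral_comp_mul_left ha fun z => g (z / a) * h z
    simp only [mul_div_cancel_left₀ _ ha] at this
    rw [this, abs_inv, ← mul_assoc, ← lintegral_const_mul _ (by fun_prop)]
    simp_rw [mul_assoc]
  calc ∫⁻ z, h z ∂(volume.withDensity f ∗ₘ volume.withDensity g)
      = ∫⁻ a, f a * ∫⁻ b, g b * h (a * b) := by
        have hmul : Measurable fun p : ℝ × ℝ => h (p.1 * p.2) := by fun_prop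
        rw [Measure.lintegral_mconv hh,
          lintegral_withDensity_eq_lintegral_mul _ hf hmul.lintegral_prod_right']
        exact lintegral_congr fun a => congrArg (f a * ·)
          (lintegral_withDensity_eq_lintegral_mul _ hg (hh.comp (measurable_const_mul a)))
    _ = ∫⁻ a, ∫⁻ z, f a * ENNReal.ofReal |a|⁻¹ * g (z / a) * h z :=
        lintegral_congr_ae <| (Measure.ae_ne volume 0).mono hinner
    _ = ∫⁻ z, mconvDensity f g z * h z := by
        rw [lintegral_lintegral_swap (by fun_prop)]
        exact lintegral_congr fun z => lintegral_mul_const _ (by fun_prop)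
    _ = _ := (lintegral_withDensity_eq_lintegral_mul _ (measurable_mconvDensity hf hg) hh).symm

end mconvDensity

theorem lintegral_Ioc_div_sqrt_one_sub_sq {t : ℝ} (h0 : 0 ≤ t) (h1 : t ≤ 1) :
    ∫⁻ y in Ioc 0 t, ENNReal.ofReal (y / √(1 - y ^ 2)) =
      ENNReal.ofReal (1 - √(1 - t ^ 2)) := by
  have hcont : ContinuousOn (fun y : ℝ => -√(1 - y ^ 2)) (Icc 0 t) := by fun_prop
  have hderiv :
      ∀ y ∈ Ioo 0 t, HasDerivAt (fun y : ℝ => -√(1 - y ^ 2)) (y / √(1 - y ^ 2)) y := by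
    rintro y ⟨hy0, hyt⟩
    have hpos : 0 < 1 - y ^ 2 := by nlinarith
    refine ((((hasDerivAt_id y).pow 2).const_sub 1).sqrt hpos.ne').neg.congr_deriv ?_
    simp only [Pi.pow_apply, id, Nat.cast_ofNat]
    field_simp
    ring
  have hint : IntervalIntegrable (fun y : ℝ => y / √(1 - y ^ 2)) volume 0 t := by
    refine intervalIntegral.intervalIntegrable_deriv_of_nonneg (uIcc_of_le h0 ▸ hcont) ?_ ?_
    · simpa [h0] using hderiv
    · simp only [h0, min_eq_left, max_eq_right]
      exact fun y hy => div_nonneg hy.1.le (sqrt_nonneg _)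
  rw [← ofReal_integral_eq_lintegral_ofReal, ← intervalIntegral.integral_of_le h0,
    intervalIntegral.integral_eq_sub_of_hasDerivAt_of_le h0 hcont hderiv hint]
  · rw [zero_pow two_ne_zero, sub_zero, sqrt_one, sub_neg_eq_add, neg_add_eq_sub]
  · exact (intervalIntegrable_iff_integrableOn_Ioc_of_le h0).1 hint
  · filter_upwards [ae_restrict_mem measurableSet_Ioc] with y hy
    exact div_nonneg hy.1.le (sqrt_nonneg _)

noncomputable def sinArccosDensity : ℝ → ℝ≥0∞ :=
  (Ioc 0 1).indicator fun y => ENNReal.ofReal (y / √(1 - y ^ 2))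

theorem measurable_sinArccosDensity : Measurable sinArccosDensity :=
  Measurable.indicator (by fun_prop) measurableSet_Ioc

theorem lintegral_Iic_sinArccosDensity {t : ℝ} (ht : 0 ≤ t) :
    ∫⁻ y in Iic t, sinArccosDensity y = ENNReal.ofReal (1 - √(1 - t ^ 2)) := by
  rw [sinArccosDensity, setLIntegral_indicator measurableSet_Ioc, Ioc_inter_Iic,
    lintegral_Ioc_div_sqrt_one_sub_sq (le_min zero_le_one ht) (min_le_left _ _)]
  rcases le_total t 1 with h | h
  · rw [min_eq_right h]
  · rw [min_eq_left h, one_pow, sub_self, sqrt_zero, sqrt_eq_zero'.2 (by nlinarith)]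

theorem lintegral_sinArccosDensity : ∫⁻ y, sinArccosDensity y = 1 := by
  rw [sinArccosDensity, lintegral_indicator measurableSet_Ioc,
    lintegral_Ioc_div_sqrt_one_sub_sq zero_le_one le_rfl]
  simp

theorem sin_arccos_half_le_iff {x t : ℝ} (ht : 0 ≤ t) :
    sin (arccos (x / 2)) ≤ t ↔ x ∉ Ioo (-(2 * √(1 - t ^ 2))) (2 * √(1 - t ^ 2)) := by
  rw [sin_arccos, sqrt_le_left ht, mem_Ioo, ← abs_lt, not_lt, ← le_div_iff₀' two_pos,
    sqrt_le_left (by positivity), div_pow, div_pow, sq_abs]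
  constructor <;> intro h <;> linarith

theorem uniform_preimage_sin_arccos_half_Iic {t : ℝ} (ht : 0 ≤ t) :
    ((4 : ℝ≥0∞)⁻¹ • volume.restrict (Icc (-2 : ℝ) 2))
        ((fun x => sin (arccos (x / 2))) ⁻¹' Iic t) =
      ENNReal.ofReal (1 - √(1 - t ^ 2)) := by
  set r := √(1 - t ^ 2)
  have hr0 : 0 ≤ r := sqrt_nonneg _
  have hr1 : r ≤ 1 := sqrt_le_one.2 (by nlinarith)
  have hpre : (fun x => sin (arccos (x / 2))) ⁻¹' Iic t ∩ Icc (-2) 2 =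
      Icc (-2) 2 \ Ioo (-(2 * r)) (2 * r) := by
    ext x
    simp only [mem_inter_iff, mem_preimage, mem_Iic, sin_arccos_half_le_iff ht, mem_sdiff]
    tauto
  have hquarter : (4 : ℝ≥0∞)⁻¹ = ENNReal.ofReal 4⁻¹ := by
    rw [ENNReal.ofReal_inv_of_pos four_pos, ENNReal.ofReal_ofNat]
  rw [Measure.smul_apply, Measure.restrict_apply' measurableSet_Icc, hpre,
    measure_sdiff (Ioo_subset_Icc_self.trans (Icc_subset_Icc (by linarith) (by linarith)))
      measurableSet_Ioo.nullMeasurableSet (by simp),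
    Real.volume_Icc, Real.volume_Ioo, ← ENNReal.ofReal_sub _ (by linarith), hquarter,
    smul_eq_mul, ← ENNReal.ofReal_mul (by norm_num)]
  congr 1
  ring

theorem map_sin_arccos_half_uniform :
    Measure.map (fun x => sin (arccos (x / 2)))
        ((4 : ℝ≥0∞)⁻¹ • volume.restrict (Icc (-2 : ℝ) 2)) =
      volume.withDensity sinArccosDensity := by
  have hφ : Measurable fun x : ℝ => sin (arccos (x / 2)) := by fun_prop
  have : IsFiniteMeasure (volume.withDensity sinArccosDensity) :=
    isFiniteMeasure_withDensity (by simp [lintegral_sinArccosDensity])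
  have : IsFiniteMeasure ((4 : ℝ≥0∞)⁻¹ • volume.restrict (Icc (-2 : ℝ) 2)) :=
    Measure.smul_finite _ (by simp)
  refine Measure.ext_of_Iic _ _ fun t => ?_
  rw [Measure.map_apply hφ measurableSet_Iic, withDensity_apply _ measurableSet_Iic]
  rcases lt_or_ge t 0 with ht | ht
  · have hpre : (fun x => sin (arccos (x / 2))) ⁻¹' Iic t = ∅ :=
      eq_empty_of_forall_notMem fun x (hx : sin (arccos (x / 2)) ≤ t) =>
        (hx.trans_lt ht).not_ge (sin_arccos (x / 2) ▸ sqrt_nonneg _)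
    have hρ : ∀ y ∈ Iic t, sinArccosDensity y = 0 := fun y hy =>
      indicator_of_notMem (fun h => (h.1.trans_le hy).not_gt ht) _
    rw [hpre, measure_empty, setLIntegral_congr_fun measurableSet_Iic hρ, lintegral_zero]
  · rw [uniform_preimage_sin_arccos_half_Iic ht, lintegral_Iic_sinArccosDensity ht]

theorem sinArccosDensity_eq_zero_of_notMem {y : ℝ} (hy : y ∉ Ioo 0 1) :
    sinArccosDensity y = 0 := by
  by_cases hy' : y ∈ Ioc 0 1
  · obtain rfl : y = 1 := hy'.2.antisymm (not_lt.1 fun h => hy ⟨hy'.1, h⟩)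
    -- at `y = 1` the formula reads `1 / √0 = 0`
    simp [sinArccosDensity]
  · exact indicator_of_notMem hy' _

theorem div_sqrt_one_sub_sq_mul_div {a z : ℝ} (hz : 0 < z) (hza : z < a) (ha : a < 1) :
    a / √(1 - a ^ 2) * a⁻¹ * (z / a / √(1 - (z / a) ^ 2)) =
      z / (√(a ^ 2 - z ^ 2) * √(1 - a ^ 2)) := by
  have ha0 : 0 < a := hz.trans hza
  have hsqrt : √(1 - (z / a) ^ 2) = √(a ^ 2 - z ^ 2) / a := by
    rw [← sqrt_sq ha0.le, ← sqrt_div' _ (sq_nonneg a), sqrt_sq ha0.le]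
    congr 1
    field_simp
  rw [hsqrt]
  have h1 : 0 < √(a ^ 2 - z ^ 2) := sqrt_pos.2 (by nlinarith)
  have h2 : 0 < √(1 - a ^ 2) := sqrt_pos.2 (by nlinarith)
  field_simp

theorem sinArccosDensity_mul_sinArccosDensity_div {z : ℝ} (hz : 0 < z) (a : ℝ) :
    sinArccosDensity a * ENNReal.ofReal |a|⁻¹ * sinArccosDensity (z / a) = (Ioo z 1).indicator
      (fun y => ENNReal.ofReal (z / (√(y ^ 2 - z ^ 2) * √(1 - y ^ 2)))) a := by
  by_cases ha : a ∈ Ioo z 1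
  · have ha0 : 0 < a := hz.trans ha.1
    have hza : z / a ∈ Ioc 0 1 := ⟨div_pos hz ha0, (div_le_one ha0).2 ha.1.le⟩
    have ha1 : a ∈ Ioc 0 1 := ⟨ha0, ha.2.le⟩
    rw [indicator_of_mem ha, sinArccosDensity, indicator_of_mem ha1, indicator_of_mem hza,
      abs_of_pos ha0,
      ← ENNReal.ofReal_mul (by positivity), ← ENNReal.ofReal_mul (by positivity),
      div_sqrt_one_sub_sq_mul_div hz ha.1 ha.2]
  · rw [indicator_of_notMem ha]
    by_cases ha' : a ∈ Ioo 0 1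
    · rw [sinArccosDensity_eq_zero_of_notMem (y := z / a) fun h => ?_, mul_zero]
      exact ha ⟨(div_lt_one ha'.1).1 h.2, ha'.2⟩
    · rw [sinArccosDensity_eq_zero_of_notMem ha', zero_mul, zero_mul]

theorem mconvDensity_sinArccosDensity_of_ne_top {z : ℝ}
    (hz : mconvDensity sinArccosDensity sinArccosDensity z ≠ ∞) :
    mconvDensity sinArccosDensity sinArccosDensity z =
      ENNReal.ofReal (if 0 < z ∧ z < 1 then
        ∫ y in Icc z 1, z / (√(y ^ 2 - z ^ 2) * √(1 - y ^ 2)) else 0) := by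
  unfold mconvDensity at hz ⊢
  rcases le_or_gt z 0 with hz0 | hz0
  · rw [if_neg fun h => hz0.not_gt h.1, ENNReal.ofReal_zero]
    have hzero (a : ℝ) :
        sinArccosDensity a * ENNReal.ofReal |a|⁻¹ * sinArccosDensity (z / a) = 0 := by
      by_cases ha : a ∈ Ioo 0 1
      · rw [sinArccosDensity_eq_zero_of_notMem fun h =>
          (div_nonpos_of_nonpos_of_nonneg hz0 ha.1.le).not_gt h.1, mul_zero]
      · rw [sinArccosDensity_eq_zero_of_notMem ha, zero_mul, zero_mul]
    simp [hzero]
  simp_rw [sinArccosDensity_mul_sinArccosDensity_div hz0,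
    lintegral_indicator measurableSet_Ioo] at hz ⊢
  split_ifs with h
  · have hnonneg : 0 ≤ᵐ[volume.restrict (Ioo z 1)]
        fun y => z / (√(y ^ 2 - z ^ 2) * √(1 - y ^ 2)) :=
      Filter.Eventually.of_forall fun y => by positivity
    have hint := (lintegral_ofReal_ne_top_iff_integrable
      (by fun_prop : Measurable _).aestronglyMeasurable hnonneg).1 hz
    rw [integral_Icc_eq_integral_Ioo, ofReal_integral_eq_lintegral_ofReal hint hnonneg]
  · rw [Ioo_eq_empty fun h' => h ⟨hz0, h'⟩]
    simp

/-- If `X₀, X₁` are independent uniforms on `[-2,2]` and `Ωᵢ = arccos(Xᵢ/2)`, then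
`sin Ω₀ · sin Ω₁` has the stated integral density on `(0,1)`. -/
theorem density_of_product_sin_arccos
    {Ω : Type*} [MeasureSpace Ω] [IsProbabilityMeasure (ℙ : Measure Ω)]
    (X₀ X₁ : Ω → ℝ) (hX₀ : Measurable X₀) (hX₁ : Measurable X₁)
    (hindep : IndepFun X₀ X₁ ℙ)
    (hU₀ : Measure.map X₀ ℙ = (4 : ENNReal)⁻¹ • volume.restrict (Set.Icc (-2 : ℝ) 2))
    (hU₁ : Measure.map X₁ ℙ = (4 : ENNReal)⁻¹ • volume.restrict (Set.Icc (-2 : ℝ) 2)) :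
    Measure.map
        (fun ω => Real.sin (Real.arccos (X₀ ω / 2)) * Real.sin (Real.arccos (X₁ ω / 2))) ℙ
      = volume.withDensity
          (fun x => ENNReal.ofReal
            (if 0 < x ∧ x < 1 then
              ∫ y in Set.Icc x 1, x / (Real.sqrt (y ^ 2 - x ^ 2) * Real.sqrt (1 - y ^ 2))
            else 0)) := by
  have hφ : Measurable fun x : ℝ => Real.sin (Real.arccos (x / 2)) := by fun_prop
  have hmap {X : Ω → ℝ} (hX : Measurable X)
      (hU : Measure.map X ℙ = (4 : ENNReal)⁻¹ • volume.restrict (Set.Icc (-2 : ℝ) 2)) :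
      Measure.map ((fun x => Real.sin (Real.arccos (x / 2))) ∘ X) ℙ =
        volume.withDensity sinArccosDensity := by
    rw [← Measure.map_map hφ hX, hU, map_sin_arccos_half_uniform]
  have hprod : Measure.map
      (fun ω => Real.sin (Real.arccos (X₀ ω / 2)) * Real.sin (Real.arccos (X₁ ω / 2))) ℙ =
        volume.withDensity (mconvDensity sinArccosDensity sinArccosDensity) := by
    refine ((hindep.comp hφ hφ).map_mul_eq_map_mconv_map
      (hφ.comp hX₀) (hφ.comp hX₁)).trans ?_
    rw [hmap hX₀ hU₀, hmap hX₁ hU₁,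
      withDensity_mconv_withDensity measurable_sinArccosDensity measurable_sinArccosDensity]
  have hfin : ∫⁻ z, mconvDensity sinArccosDensity sinArccosDensity z ≠ ⊤ := by
    have : IsProbabilityMeasure
        (volume.withDensity (mconvDensity sinArccosDensity sinArccosDensity)) :=
      hprod ▸ Measure.isProbabilityMeasure_map (by fun_prop)
    simpa only [withDensity_apply _ MeasurableSet.univ, Measure.restrict_univ] using
      measure_ne_top (volume.withDensity (mconvDensity sinArccosDensity sinArccosDensity)) univ
  rw [hprod]
  refine withDensity_congr_ae ?_
  filter_upwards [ae_lt_top (measurable_mconvDensity measurable_sinArccosDensity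
    measurable_sinArccosDensity) hfin] with z hz
  exact mconvDensity_sinArccosDensity_of_ne_top hz.ne
end

section
/- Let X₀ and X₁ be independent random variables, each uniformly distributed on [−2, 2], and set Ω₀ = arccos(X₀/2), Ω₁ = arccos(X₁/2). Then for every real x with 0 < x < 1, P(Ω₀/Ω₁ ≤ x) = 1/2 + (1 + cos(πx)) / (4·(x² − 1)). -/
/-
Write `Θᵢ = arccos (Xᵢ / 2)`. Since `X = 2 cos Θ`, the uniform law of `X` on `[-2, 2]` gives
`P(Θ ≤ t) = (1 - cos t) / 2` on `[0, π]`, i.e. `Θ` has density `sin / 2` there. Conditioning on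
`Θ₁` (Fubini, using independence) and noting `Θ₁ > 0` almost surely,
`P(Θ₀ / Θ₁ ≤ x) = E[(1 - cos (x Θ₁)) / 2] = ¼ ∫₀^π (1 - cos (x s)) sin s ds`,
an elementary integral for `x ≠ ±1`.
-/

open MeasureTheory ProbabilityTheory Real Set
open scoped ENNReal

lemma Real.arccos_le_iff_cos_le {y t : ℝ} (hy₁ : -1 ≤ y) (hy₂ : y ≤ 1) (ht₀ : 0 ≤ t)
    (ht : t ≤ π) : arccos y ≤ t ↔ cos t ≤ y := by
  conv_rhs => rw [← cos_arccos hy₁ hy₂]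
  exact (strictAntiOn_cos.le_iff_ge ⟨ht₀, ht⟩ ⟨arccos_nonneg y, arccos_le_pi y⟩).symm

lemma integral_comp_arccos_half {g : ℝ → ℝ} (hg : ContinuousOn g (Icc 0 π)) :
    ∫ b in (-2)..2, g (arccos (b / 2)) = 2 * ∫ s in 0..π, g s * sin s := by
  have hcomp : Continuous fun b : ℝ => g (arccos (b / 2)) :=
    hg.comp_continuous (by fun_prop) fun b => ⟨arccos_nonneg _, arccos_le_pi _⟩
  have hsubst := intervalIntegral.integral_deriv_smul_comp (a := π) (b := 0)
    (fun s _ => (hasDerivAt_cos s).const_mul 2) (by fun_prop) hcomp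
  simp only [cos_pi, cos_zero, smul_eq_mul, Function.comp_def] at hsubst
  norm_num at hsubst
  rw [← hsubst, intervalIntegral.integral_symm, neg_neg, ← intervalIntegral.integral_const_mul]
  refine intervalIntegral.integral_congr fun s hs => ?_
  rw [uIcc_of_le pi_pos.le] at hs
  simp only [arccos_cos hs.1 hs.2]
  ring

lemma integral_one_sub_cos_mul_mul_sin {x : ℝ} (hx : x ^ 2 ≠ 1) :
    ∫ s in 0..π, (1 - cos (x * s)) * sin s = 2 - (1 + cos (π * x)) / (1 - x ^ 2) := by
  have hp : 1 + x ≠ 0 := fun h => hx (by nlinarith)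
  have hm : 1 - x ≠ 0 := fun h => hx (by nlinarith)
  have hF : ∀ s, HasDerivAt (fun s => -cos s + cos ((1 + x) * s) / (2 * (1 + x))
      + cos ((1 - x) * s) / (2 * (1 - x))) ((1 - cos (x * s)) * sin s) s := by
    -- `2 cos (x s) sin s = sin ((1 + x) s) + sin ((1 - x) s)`
    intro s
    refine (((hasDerivAt_cos s).neg.add
      (((hasDerivAt_id s).const_mul (1 + x)).cos.div_const (2 * (1 + x)))).add
      (((hasDerivAt_id s).const_mul (1 - x)).cos.div_const (2 * (1 - x)))).congr_deriv ?_
    rw [id_eq, show (1 + x) * s = s + x * s by ring, show (1 - x) * s = s - x * s by ring,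
      sin_add, sin_sub]
    field_simp
    ring
  rw [intervalIntegral.integral_eq_sub_of_hasDerivAt (fun s _ => hF s)
    ((by fun_prop : Continuous fun s => (1 - cos (x * s)) * sin s).intervalIntegrable _ _)]
  simp only [mul_zero, cos_zero, cos_pi, show (1 + x) * π = π * x + π by ring,
    show (1 - x) * π = π - π * x by ring, cos_add_pi, cos_pi_sub]
  rw [show 1 - x ^ 2 = (1 + x) * (1 - x) by ring]
  field_simp
  ring

lemma setOf_arccos_half_le_inter_Icc {t : ℝ} (ht₀ : 0 ≤ t) (ht : t ≤ π) :
    {a : ℝ | arccos (a / 2) ≤ t} ∩ Icc (-2) 2 = Icc (2 * cos t) 2 := by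
  ext a
  simp only [mem_inter_iff, mem_ofPred_eq, mem_Icc]
  constructor
  · rintro ⟨h, ha₁, ha₂⟩
    have := (arccos_le_iff_cos_le (by linarith) (by linarith) ht₀ ht).1 h
    constructor <;> linarith
  · rintro ⟨ha₁, ha₂⟩
    have := neg_one_le_cos t
    exact ⟨(arccos_le_iff_cos_le (by linarith) (by linarith) ht₀ ht).2 (by linarith),
      by linarith, ha₂⟩

local notation "𝒰" => ((4 : ℝ≥0∞)⁻¹ • volume.restrict (Icc (-2 : ℝ) 2) : Measure ℝ)

lemma ae_uniform_lt_two : ∀ᵐ b ∂𝒰, b < 2 := by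
  refine Measure.ae_smul_measure ?_ _
  rw [Measure.restrict_congr_set Ico_ae_eq_Icc.symm]
  exact (ae_restrict_mem measurableSet_Ico).mono fun b hb => hb.2

lemma uniform_setOf_arccos_half_le {t : ℝ} (ht₀ : 0 ≤ t) (ht : t ≤ π) :
    𝒰 {a | arccos (a / 2) ≤ t} = ENNReal.ofReal ((1 - cos t) / 2) := by
  rw [Measure.smul_apply, Measure.restrict_apply (measurableSet_le (by fun_prop) measurable_const),
    setOf_arccos_half_le_inter_Icc ht₀ ht, volume_Icc, smul_eq_mul, ← ENNReal.div_eq_inv_mul,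
    ← ENNReal.ofReal_ofNat 4, ← ENNReal.ofReal_div_of_pos four_pos]
  congr 1
  ring

lemma uniform_setOf_arccos_half_div_le {x b : ℝ} (hx₀ : 0 ≤ x) (hx₁ : x ≤ 1) (hb : b < 2) :
    𝒰 {a | arccos (a / 2) / arccos (b / 2) ≤ x}
      = ENNReal.ofReal ((1 - cos (x * arccos (b / 2))) / 2) := by
  have hpos : 0 < arccos (b / 2) := arccos_pos.2 (by linarith)
  simp_rw [div_le_iff₀ hpos]
  exact uniform_setOf_arccos_half_le (by positivity)
    ((mul_le_of_le_one_left hpos.le hx₁).trans (arccos_le_pi _))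

lemma lintegral_uniform_ofReal_comp_arccos_half {g : ℝ → ℝ} (hg : ContinuousOn g (Icc 0 π))
    (hg₀ : ∀ s ∈ Icc 0 π, 0 ≤ g s) :
    ∫⁻ b, ENNReal.ofReal (g (arccos (b / 2))) ∂𝒰
      = ENNReal.ofReal ((∫ s in 0..π, g s * sin s) / 2) := by
  have hcont : Continuous fun b : ℝ => g (arccos (b / 2)) :=
    hg.comp_continuous (by fun_prop) fun b => ⟨arccos_nonneg _, arccos_le_pi _⟩
  rw [lintegral_smul_measure, ← ofReal_integral_eq_lintegral_ofReal hcont.integrableOn_Icc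
      (ae_of_all _ fun b => hg₀ _ ⟨arccos_nonneg _, arccos_le_pi _⟩),
    integral_Icc_eq_integral_Ioc, ← intervalIntegral.integral_of_le (by norm_num),
    integral_comp_arccos_half hg, smul_eq_mul, ← ENNReal.div_eq_inv_mul,
    ← ENNReal.ofReal_ofNat 4, ← ENNReal.ofReal_div_of_pos four_pos]
  congr 1
  ring

/-- CDF of the ratio `Ω₀ / Ω₁` of arccosines of independent uniforms on `[-2,2]`,
for arguments in `(0,1)`. -/
theorem cdf_ratio_lt_one
    {Ω : Type*} [MeasureSpace Ω] [IsProbabilityMeasure (ℙ : Measure Ω)]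
    (X₀ X₁ : Ω → ℝ) (hX₀ : Measurable X₀) (hX₁ : Measurable X₁)
    (hindep : IndepFun X₀ X₁ ℙ)
    (hU₀ : Measure.map X₀ ℙ = (4 : ENNReal)⁻¹ • volume.restrict (Set.Icc (-2 : ℝ) 2))
    (hU₁ : Measure.map X₁ ℙ = (4 : ENNReal)⁻¹ • volume.restrict (Set.Icc (-2 : ℝ) 2))
    (x : ℝ) (hx₀ : 0 < x) (hx₁ : x < 1) :
    ℙ {ω | Real.arccos (X₀ ω / 2) / Real.arccos (X₁ ω / 2) ≤ x}
      = ENNReal.ofReal (1 / 2 + (1 + Real.cos (Real.pi * x)) / (4 * (x ^ 2 - 1))) := by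
  have hlaw : (ℙ : Measure Ω).map (fun ω => (X₀ ω, X₁ ω)) = (𝒰).prod 𝒰 := by
    rw [(indepFun_iff_map_prod_eq_prod_map_map hX₀.aemeasurable hX₁.aemeasurable).1 hindep,
      hU₀, hU₁]
  have hS : MeasurableSet {p : ℝ × ℝ | arccos (p.1 / 2) / arccos (p.2 / 2) ≤ x} :=
    measurableSet_le (by fun_prop) measurable_const
  calc ℙ {ω | arccos (X₀ ω / 2) / arccos (X₁ ω / 2) ≤ x}
      = (𝒰).prod 𝒰 {p : ℝ × ℝ | arccos (p.1 / 2) / arccos (p.2 / 2) ≤ x} := by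
        rw [← hlaw, Measure.map_apply (by fun_prop) hS]
        rfl
    _ = ∫⁻ b, 𝒰 {a | arccos (a / 2) / arccos (b / 2) ≤ x} ∂𝒰 := Measure.prod_apply_symm hS
    _ = ∫⁻ b, ENNReal.ofReal ((1 - cos (x * arccos (b / 2))) / 2) ∂𝒰 :=
        lintegral_congr_ae (ae_uniform_lt_two.mono fun b hb =>
          uniform_setOf_arccos_half_div_le hx₀.le hx₁.le hb)
    _ = ENNReal.ofReal ((∫ s in 0..π, (1 - cos (x * s)) / 2 * sin s) / 2) :=
        lintegral_uniform_ofReal_comp_arccos_half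
          (by fun_prop : Continuous fun s => (1 - cos (x * s)) / 2).continuousOn fun s _ => by
          linarith [cos_le_one (x * s)]
    _ = ENNReal.ofReal (1 / 2 + (1 + cos (π * x)) / (4 * (x ^ 2 - 1))) := by
        have hx : x ^ 2 ≠ 1 := by nlinarith
        simp_rw [div_mul_eq_mul_div, intervalIntegral.integral_div,
          integral_one_sub_cos_mul_mul_sin hx]
        congr 1
        field_simp
        ring
end
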